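/- arXiv:0807.1234 — 2 statements merged into one kernel-verified Lean document; each statement's English description precedes it below -/
import Mathlib

section
/- If g is a non-degenerate symmetric bilinear form on a finite-dimensional complex vector space V and A is a g-skew endomorphism, then g restricts to a non-degenerate pairing between the full generalised eigenspace D_α of A for eigenvalue α and the full generalised eigenspace D_{-α} for eigenvalue -α; in particular dim D_α = dim D_{-α}. -/
/-!
For a `g`-skew endomorphism `A`, the identity
`g ((A - β) u) v + g u ((A - γ) v) = -(β + γ) g u v`
shows, by induction on the nilpotency orders, that generalised eigenvectors for eigenvalues `β`, `γ`
with `β + γ ≠ 0` are `g`-orthogonal. Since `V` is the sum of the generalised eigenspaces, a vector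
of `D_α` orthogonal to `D_{-α}` is orthogonal to everything, hence zero. Applying this to `g` and
to its transpose (also non-degenerate, as `V` is finite-dimensional) gives a pairing
`D_α × D_{-α} → ℂ` that is injective on both sides, i.e. a perfect pairing, so the two spaces have
the same dimension.
-/

open Module Module.End
open LinearMap (BilinForm)

namespace LinearMap

variable {K V₁ V₂ : Type*} [Field K] [AddCommGroup V₁] [Module K V₁] [AddCommGroup V₂]
  [Module K V₂]

theorem injective_domRestrict₁₂_of_forall_exists_apply_ne_zero (B : V₁ →ₗ[K] V₂ →ₗ[K] K)
    {W₁ : Submodule K V₁} {W₂ : Submodule K V₂} (h : ∀ u ∈ W₁, u ≠ 0 → ∃ v ∈ W₂, B u v ≠ 0) :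
    Function.Injective (B.domRestrict₁₂ W₁ W₂) := by
  rw [← ker_eq_bot, ← separatingLeft_iff_ker_eq_bot]
  rintro ⟨u, hu⟩ hzero
  by_contra hne
  obtain ⟨v, hv, hBuv⟩ := h u hu (by simpa using hne)
  exact hBuv (hzero ⟨v, hv⟩)

theorem finrank_eq_of_forall_exists_apply_ne_zero [FiniteDimensional K V₁]
    (B : V₁ →ₗ[K] V₂ →ₗ[K] K) {W₁ : Submodule K V₁} {W₂ : Submodule K V₂}
    (h₁ : ∀ u ∈ W₁, u ≠ 0 → ∃ v ∈ W₂, B u v ≠ 0)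
    (h₂ : ∀ v ∈ W₂, v ≠ 0 → ∃ u ∈ W₁, B u v ≠ 0) :
    finrank K W₁ = finrank K W₂ := by
  have : (B.domRestrict₁₂ W₁ W₂).IsPerfPair :=
    .of_injective (injective_domRestrict₁₂_of_forall_exists_apply_ne_zero B h₁)
      (injective_domRestrict₁₂_of_forall_exists_apply_ne_zero B.flip h₂)
  exact finrank_of_isPerfPair (B.domRestrict₁₂ W₁ W₂)

end LinearMap

namespace LinearMap.BilinForm

section CommRing

variable {R M : Type*} [CommRing R] [AddCommGroup M] [Module R M] {g : BilinForm R M}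
  {A : End R M}

theorem flip_apply_neg_apply (hskew : ∀ u v, g (A u) v = -g u (A v)) (u v : M) :
    g.flip (A u) v = -g.flip u (A v) := by
  rw [flip_apply, flip_apply, hskew, neg_neg]

theorem apply_sub_smul_add_apply_sub_smul (hskew : ∀ u v, g (A u) v = -g u (A v))
    (β γ : R) (u v : M) :
    g ((A - β • 1) u) v + g u ((A - γ • 1) v) = -((β + γ) * g u v) := by
  simp only [LinearMap.sub_apply, LinearMap.smul_apply, one_apply, map_sub, map_smul,
    smul_eq_mul, hskew]
  ring

theorem apply_eq_zero_of_mem_maxGenEigenspace [NoZeroDivisors R]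
    (hskew : ∀ u v, g (A u) v = -g u (A v)) {β γ : R} (hβγ : β + γ ≠ 0) {u v : M}
    (hu : u ∈ A.maxGenEigenspace β) (hv : v ∈ A.maxGenEigenspace γ) : g u v = 0 := by
  rw [mem_maxGenEigenspace] at hu hv
  obtain ⟨k, hu⟩ := hu
  obtain ⟨l, hv⟩ := hv
  induction k generalizing u l v with
  | zero => simp_all
  | succ k ihk =>
    induction l generalizing v with
    | zero => simp_all
    | succ l ihl =>
      have hAu : ((A - β • 1) ^ k) ((A - β • 1) u) = 0 := by rwa [pow_succ, mul_apply] at hu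
      have hAv : ((A - γ • 1) ^ l) ((A - γ • 1) v) = 0 := by rwa [pow_succ, mul_apply] at hv
      have key := apply_sub_smul_add_apply_sub_smul hskew β γ u v
      rw [ihk hAu _ hv, ihl hAv, add_zero, zero_eq_neg] at key
      exact (mul_eq_zero.1 key).resolve_left hβγ

end CommRing

theorem exists_apply_ne_zero_of_mem_maxGenEigenspace {K V : Type*} [Field K] [IsAlgClosed K]
    [AddCommGroup V] [Module K V] [FiniteDimensional K V] {g : BilinForm K V} {A : End K V}
    (hg : g.SeparatingLeft) (hskew : ∀ u v, g (A u) v = -g u (A v)) {α : K} {u : V}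
    (hu : u ∈ A.maxGenEigenspace α) (hu0 : u ≠ 0) :
    ∃ v ∈ A.maxGenEigenspace (-α), g u v ≠ 0 := by
  by_contra! h
  have hker : ⊤ ≤ ker (g u) := by
    rw [← iSup_maxGenEigenspace_eq_top A]
    refine iSup_le fun β v hv => ?_
    rcases eq_or_ne β (-α) with rfl | hβ
    · exact h v hv
    · exact apply_eq_zero_of_mem_maxGenEigenspace hskew
        (fun hαβ => hβ (eq_neg_of_add_eq_zero_right hαβ)) hu hv
  exact hu0 (hg u fun v => hker Submodule.mem_top)

end LinearMap.BilinForm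

open LinearMap.BilinForm in
theorem stmt2_general {V : Type*} [AddCommGroup V] [Module ℂ V] [FiniteDimensional ℂ V]
    (g : LinearMap.BilinForm ℂ V)
    (hnd : ∀ u : V, (∀ v : V, g u v = 0) → u = 0)
    (A : V →ₗ[ℂ] V) (hskew : ∀ u v : V, g (A u) v = - g u (A v))
    (α : ℂ)
    (Dα Dnα : Submodule ℂ V)
    (hDα : Dα = LinearMap.ker ((A - α • (1 : Module.End ℂ V)) ^ (finrank ℂ V)))
    (hDnα : Dnα = LinearMap.ker ((A - (-α) • (1 : Module.End ℂ V)) ^ (finrank ℂ V))) :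
    (∀ u ∈ Dα, u ≠ 0 → ∃ v ∈ Dnα, g u v ≠ 0) ∧
    (∀ v ∈ Dnα, v ≠ 0 → ∃ u ∈ Dα, g u v ≠ 0) ∧
    finrank ℂ Dα = finrank ℂ Dnα := by
  simp only [← genEigenspace_nat, ← maxGenEigenspace_eq_genEigenspace_finrank] at hDα hDnα
  subst hDα hDnα
  have hflip : g.flip.SeparatingLeft := (Nondegenerate.ofSeparatingLeft hnd).flip.1
  have left (u) (hu : u ∈ maxGenEigenspace A α) (hu0 : u ≠ 0) :=
    exists_apply_ne_zero_of_mem_maxGenEigenspace hnd hskew hu hu0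
  have right (v) (hv : v ∈ maxGenEigenspace A (-α)) (hv0 : v ≠ 0) :
      ∃ u ∈ maxGenEigenspace A α, g u v ≠ 0 := by
    simpa using
      exists_apply_ne_zero_of_mem_maxGenEigenspace hflip (flip_apply_neg_apply hskew) hv hv0
  exact ⟨left, right, LinearMap.finrank_eq_of_forall_exists_apply_ne_zero g left right⟩

theorem stmt2 {V : Type*} [AddCommGroup V] [Module ℂ V] [FiniteDimensional ℂ V]
    (g : LinearMap.BilinForm ℂ V)
    (hsym : ∀ u v : V, g u v = g v u)
    (hnd : ∀ u : V, (∀ v : V, g u v = 0) → u = 0)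
    (A : V →ₗ[ℂ] V) (hskew : ∀ u v : V, g (A u) v = - g u (A v))
    (α : ℂ)
    (Dα Dnα : Submodule ℂ V)
    (hDα : Dα = LinearMap.ker ((A - α • (1 : Module.End ℂ V)) ^ (finrank ℂ V)))
    (hDnα : Dnα = LinearMap.ker ((A - (-α) • (1 : Module.End ℂ V)) ^ (finrank ℂ V))) :
    (∀ u ∈ Dα, u ≠ 0 → ∃ v ∈ Dnα, g u v ≠ 0) ∧
    (∀ v ∈ Dnα, v ≠ 0 → ∃ u ∈ Dα, g u v ≠ 0) ∧
    finrank ℂ Dα = finrank ℂ Dnα :=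
  stmt2_general g hnd A hskew α Dα Dnα hDα hDnα
end

section
/- Let V be a real vector space, g a non-degenerate symmetric bilinear form, A a g-skew automorphism of V, and e ∈ O(g). If every generalised eigenspace of the complexification of eAe⁻¹ is contained in L₊ or in L₋ (the ±i eigenspaces of a complex structure J compatible with g), then eAe⁻¹ commutes with J, and consequently the form ω defined by ω(X,Y) = g(AX,Y) satisfies: (e⁻¹·ω) is J-hermitian. -/
open Module TensorProduct

theorem stmt15 {V : Type*} [AddCommGroup V] [Module ℝ V] [FiniteDimensional ℝ V]
    (g : LinearMap.BilinForm ℝ V)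
    (hsym : ∀ u v : V, g u v = g v u)
    (hnd : ∀ u : V, (∀ v : V, g u v = 0) → u = 0)
    (T : V →ₗ[ℝ] V) (hT : Function.Bijective T)
    (hskew : ∀ X Y : V, g (T X) Y = - g X (T Y))
    (J : V →ₗ[ℝ] V) (hJ : ∀ v : V, J (J v) = -v)
    (hgJ : ∀ X Y : V, g (J X) (J Y) = g X Y)
    (Lp Lm : Submodule ℂ (ℂ ⊗[ℝ] V))
    (hLp : Lp = LinearMap.ker
      (LinearMap.baseChange ℂ J - Complex.I • (1 : Module.End ℂ (ℂ ⊗[ℝ] V))))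
    (hLm : Lm = LinearMap.ker
      (LinearMap.baseChange ℂ J + Complex.I • (1 : Module.End ℂ (ℂ ⊗[ℝ] V))))
    (e : V ≃ₗ[ℝ] V) (he : ∀ X Y : V, g (e X) (e Y) = g X Y)
    (B : V →ₗ[ℝ] V)
    (hB : B = (e : V →ₗ[ℝ] V) ∘ₗ T ∘ₗ (e.symm : V →ₗ[ℝ] V))
    (heig : ∀ α : ℂ,
      LinearMap.ker ((LinearMap.baseChange ℂ B - α • (1 : Module.End ℂ (ℂ ⊗[ℝ] V)))
          ^ (finrank ℂ (ℂ ⊗[ℝ] V))) ≤ Lp ∨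
      LinearMap.ker ((LinearMap.baseChange ℂ B - α • (1 : Module.End ℂ (ℂ ⊗[ℝ] V)))
          ^ (finrank ℂ (ℂ ⊗[ℝ] V))) ≤ Lm) :
    B ∘ₗ J = J ∘ₗ B ∧
    ∀ X Y : V, g (T (e.symm (J X))) (e.symm (J Y)) = g (T (e.symm X)) (e.symm Y) := by
  have hcomm : B ∘ₗ J = J ∘ₗ B := by
    set B' : Module.End ℂ (ℂ ⊗[ℝ] V) := LinearMap.baseChange ℂ B with hB'
    set J' : Module.End ℂ (ℂ ⊗[ℝ] V) := LinearMap.baseChange ℂ J with hJ'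
    have key : ∀ x : ℂ ⊗[ℝ] V, J' (B' x) = B' (J' x) := by
      have htop := Module.End.iSup_maxGenEigenspace_eq_top B'
      have hker : (⨆ μ : ℂ, B'.maxGenEigenspace μ) ≤
          LinearMap.ker (J' * B' - B' * J') := by
        apply iSup_le
        intro μ
        have hmax : B'.maxGenEigenspace μ =
            LinearMap.ker ((B' - μ • 1) ^ (finrank ℂ (ℂ ⊗[ℝ] V))) := by
          rw [Module.End.maxGenEigenspace_eq_genEigenspace_finrank,
            Module.End.genEigenspace_nat]
        intro y hy
        have hBy : B' y ∈ B'.maxGenEigenspace μ :=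
          Module.End.mapsTo_maxGenEigenspace_of_comm (Commute.refl B') μ hy
        rcases heig μ with h | h
        · have h1 : J' y = Complex.I • y := by
            have := h (hmax ▸ hy)
            rw [hLp, LinearMap.mem_ker] at this
            simpa [sub_eq_zero, LinearMap.sub_apply] using this
          have h2 : J' (B' y) = Complex.I • (B' y) := by
            have := h (hmax ▸ hBy)
            rw [hLp, LinearMap.mem_ker] at this
            simpa [sub_eq_zero, LinearMap.sub_apply] using this
          simp [LinearMap.mem_ker, LinearMap.sub_apply, Module.End.mul_apply, h1, h2,
            map_smul]
        · have h1 : J' y = -(Complex.I • y) := by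
            have := h (hmax ▸ hy)
            rw [hLm, LinearMap.mem_ker] at this
            simpa [LinearMap.add_apply, add_eq_zero_iff_eq_neg] using this
          have h2 : J' (B' y) = -(Complex.I • (B' y)) := by
            have := h (hmax ▸ hBy)
            rw [hLm, LinearMap.mem_ker] at this
            simpa [LinearMap.add_apply, add_eq_zero_iff_eq_neg] using this
          simp [LinearMap.mem_ker, LinearMap.sub_apply, Module.End.mul_apply, h1, h2,
            map_smul, map_neg]
      intro x
      have hx : x ∈ (⊤ : Submodule ℂ (ℂ ⊗[ℝ] V)) := Submodule.mem_top
      rw [← htop] at hx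
      have := hker hx
      rw [LinearMap.mem_ker, LinearMap.sub_apply, Module.End.mul_apply,
        Module.End.mul_apply, sub_eq_zero] at this
      exact this
    ext v
    have h := key ((1 : ℂ) ⊗ₜ[ℝ] v)
    rw [show B' ((1 : ℂ) ⊗ₜ[ℝ] v) = (1 : ℂ) ⊗ₜ[ℝ] (B v) from LinearMap.baseChange_tmul _ _ _,
      show J' ((1 : ℂ) ⊗ₜ[ℝ] v) = (1 : ℂ) ⊗ₜ[ℝ] (J v) from LinearMap.baseChange_tmul _ _ _,
      show J' ((1 : ℂ) ⊗ₜ[ℝ] (B v)) = (1 : ℂ) ⊗ₜ[ℝ] (J (B v)) from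
        LinearMap.baseChange_tmul _ _ _,
      show B' ((1 : ℂ) ⊗ₜ[ℝ] (J v)) = (1 : ℂ) ⊗ₜ[ℝ] (B (J v)) from
        LinearMap.baseChange_tmul _ _ _] at h
    let r : ℂ ⊗[ℝ] V →ₗ[ℝ] V :=
      (TensorProduct.lid ℝ V).toLinearMap ∘ₗ LinearMap.rTensor V Complex.reLm
    have hr : ∀ w : V, r ((1 : ℂ) ⊗ₜ[ℝ] w) = w := by
      intro w
      simp [r, Complex.reLm]
    have := congrArg r h
    rw [hr, hr] at this
    simpa using this.symm
  refine ⟨hcomm, ?_⟩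
  intro X Y
  have hBJ : ∀ v : V, B (J v) = J (B v) := fun v => LinearMap.congr_fun hcomm v
  calc g (T (e.symm (J X))) (e.symm (J Y))
      = g (e (T (e.symm (J X)))) (e (e.symm (J Y))) := (he _ _).symm
    _ = g (B (J X)) (J Y) := by rw [hB]; simp
    _ = g (J (B X)) (J Y) := by rw [hBJ]
    _ = g (B X) Y := hgJ _ _
    _ = g (e (T (e.symm X))) (e (e.symm Y)) := by rw [hB]; simp
    _ = g (T (e.symm X)) (e.symm Y) := he _ _
end
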